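/- arXiv:2408.03546 — 2 statements merged into one kernel-verified Lean document; each statement's English description precedes it below -/
import Mathlib

section
/- Fix real p > 1 and b > 0, and set q̃_b := (p−1)/(b^{p−1}+1) + b/(b+1). Then for every q̄ with 0 < q̄ < q̃_b there exists an integer k₀ ≥ 1 such that γ_{k+1} ≤ exp(−q̄/k) for all integers k ≥ k₀. -/
/-!
Writing `x = 1/k`, one has `k·α_{k+1} = k((1+x)^{p−1} − 1)/((1+x)^{p−1} + b^{p−1})`, whose
limit is `(p−1)/(1+b^{p−1})` because `p − 1` is the derivative of `t ↦ (1+t)^{p−1}` at `0`.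
Hence `α_{k+1} → 0` and `k·β_{k+1} → b/(b+1)`, so `k(1 − γ_{k+1}) → q̃_b`. For `q̄ < q̃_b`
this gives eventually `γ_{k+1} ≤ 1 − q̄/k ≤ exp(−q̄/k)`.
-/

open Real Filter Topology

/-- `α_{i+1} = ((i+1)^{p−1} − i^{p−1})/((i+1)^{p−1} + b^{p−1} i^{p−1})`. -/
noncomputable def alphaCoef (p b : ℝ) (i : ℕ) : ℝ :=
  (((i : ℝ) + 1) ^ (p - 1) - (i : ℝ) ^ (p - 1)) /
    (((i : ℝ) + 1) ^ (p - 1) + b ^ (p - 1) * (i : ℝ) ^ (p - 1))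

/-- `β_{i+1} = (1 − α_{i+1}) · b/((b+1)(i+1))`. -/
noncomputable def betaCoef (p b : ℝ) (i : ℕ) : ℝ :=
  (1 - alphaCoef p b i) * (b / ((b + 1) * ((i : ℝ) + 1)))

/-- `γ_{i+1} = 1 − α_{i+1} − β_{i+1}`. -/
noncomputable def gammaCoef (p b : ℝ) (i : ℕ) : ℝ :=
  1 - alphaCoef p b i - betaCoef p b i

lemma tendsto_mul_one_add_inv_rpow_sub_one (r : ℝ) :
    Tendsto (fun x : ℝ => x * ((1 + x⁻¹) ^ r - 1)) atTop (𝓝 r) := by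
  have hderiv : HasDerivAt (fun t : ℝ => (1 + t) ^ r) r 0 := by
    simpa using ((hasDerivAt_id (0 : ℝ)).const_add 1).rpow_const (p := r) (Or.inl (by simp))
  have hinv : Tendsto (fun x : ℝ => x⁻¹) atTop (𝓝[≠] 0) :=
    tendsto_nhdsWithin_mono_right (fun _ hx => ne_of_gt hx) tendsto_inv_atTop_nhdsGT_zero
  refine ((hasDerivAt_iff_tendsto_slope.mp hderiv).comp hinv).congr fun x => ?_
  simp [slope_def_field, div_eq_mul_inv, mul_comm]

lemma alphaCoef_eq_one_add_inv_rpow {p b : ℝ} {k : ℕ} (hk : k ≠ 0) :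
    alphaCoef p b k =
      ((1 + (k : ℝ)⁻¹) ^ (p - 1) - 1) / ((1 + (k : ℝ)⁻¹) ^ (p - 1) + b ^ (p - 1)) := by
  have hk : (0 : ℝ) < k := by positivity
  have hsplit : (k : ℝ) + 1 = k * (1 + (k : ℝ)⁻¹) := by field_simp
  rw [alphaCoef, hsplit, mul_rpow hk.le (by positivity)]
  generalize (1 + (k : ℝ)⁻¹) ^ (p - 1) = A
  calc _ = (k : ℝ) ^ (p - 1) * (A - 1) / ((k : ℝ) ^ (p - 1) * (A + b ^ (p - 1))) := by ring_nf
    _ = _ := mul_div_mul_left _ _ (rpow_pos_of_pos hk (p - 1)).ne'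

lemma tendsto_mul_alphaCoef {p b : ℝ} (hb : 0 ≤ b) :
    Tendsto (fun k : ℕ => k * alphaCoef p b k) atTop (𝓝 ((p - 1) / (b ^ (p - 1) + 1))) := by
  have hinv : Tendsto (fun k : ℕ => 1 + (k : ℝ)⁻¹) atTop (𝓝 1) := by
    simpa using (tendsto_inv_atTop_zero.comp tendsto_natCast_atTop_atTop).const_add (1 : ℝ)
  have hden : Tendsto (fun k : ℕ => (1 + (k : ℝ)⁻¹) ^ (p - 1) + b ^ (p - 1)) atTop
      (𝓝 (b ^ (p - 1) + 1)) := by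
    simpa [add_comm] using
      (hinv.rpow_const (p := p - 1) (Or.inl one_ne_zero)).add_const (b ^ (p - 1))
  have hnum := (tendsto_mul_one_add_inv_rpow_sub_one (p - 1)).comp tendsto_natCast_atTop_atTop
  refine (hnum.div hden (by positivity)).congr' ?_
  filter_upwards [eventually_ne_atTop 0] with k hk
  simp [alphaCoef_eq_one_add_inv_rpow hk, mul_div_assoc]

lemma tendsto_alphaCoef_zero {p b : ℝ} (hb : 0 ≤ b) :
    Tendsto (alphaCoef p b) atTop (𝓝 0) := by
  have h := (tendsto_mul_alphaCoef (p := p) hb).mul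
    (tendsto_inv_atTop_zero.comp (tendsto_natCast_atTop_atTop (R := ℝ)))
  rw [mul_zero] at h
  refine h.congr' ?_
  filter_upwards [eventually_ne_atTop 0] with k hk
  simp [mul_comm, hk]

lemma tendsto_mul_betaCoef {p b : ℝ} (hb : 0 ≤ b) :
    Tendsto (fun k : ℕ => k * betaCoef p b k) atTop (𝓝 (b / (b + 1))) := by
  have h := (((tendsto_alphaCoef_zero (p := p) hb).const_sub 1).mul_const (b / (b + 1))).mul
    (tendsto_natCast_div_add_atTop (1 : ℝ))
  rw [sub_zero, one_mul, mul_one] at h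
  refine h.congr fun k => ?_
  rw [betaCoef, div_mul_eq_div_div]
  ring

lemma tendsto_mul_one_sub_gammaCoef {p b : ℝ} (hb : 0 ≤ b) :
    Tendsto (fun k : ℕ => k * (1 - gammaCoef p b k)) atTop
      (𝓝 ((p - 1) / (b ^ (p - 1) + 1) + b / (b + 1))) :=
  ((tendsto_mul_alphaCoef hb).add (tendsto_mul_betaCoef hb)).congr fun k => by
    rw [gammaCoef]
    ring

lemma eventually_le_exp_neg_div_of_tendsto_mul_one_sub {g : ℕ → ℝ} {q q' : ℝ}
    (hg : Tendsto (fun k : ℕ => k * (1 - g k)) atTop (𝓝 q)) (hq : q' < q) :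
    ∀ᶠ k : ℕ in atTop, g k ≤ exp (-q' / k) := by
  filter_upwards [hg.eventually (eventually_ge_nhds hq), eventually_gt_atTop 0] with k hk hk0
  have hk0 : (0 : ℝ) < k := by exact_mod_cast hk0
  calc g k ≤ -q' / k + 1 := by
        rw [neg_div, ← sub_eq_neg_add, le_sub_comm, div_le_iff₀ hk0]
        linarith
    _ ≤ exp (-q' / k) := add_one_le_exp _

theorem gamma_exponential_bound_general (p b : ℝ) (hb : 0 < b)
    (qt : ℝ) (hqt : qt = (p - 1) / (b ^ (p - 1) + 1) + b / (b + 1))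
    (qbar : ℝ) (hq' : qbar < qt) :
    ∃ k₀ : ℕ, 1 ≤ k₀ ∧ ∀ k : ℕ, k₀ ≤ k →
      gammaCoef p b k ≤ Real.exp (-qbar / (k : ℝ)) := by
  subst hqt
  obtain ⟨k₀, hk₀⟩ := (eventually_le_exp_neg_div_of_tendsto_mul_one_sub
    (tendsto_mul_one_sub_gammaCoef hb.le) hq').exists_forall_of_atTop
  exact ⟨max k₀ 1, le_max_right _ _, fun k hk => hk₀ k (le_of_max_le_left hk)⟩

/-- **Lemma.** With `q̃_b = (p−1)/(b^{p−1}+1) + b/(b+1)`, for every `0 < q̄ < q̃_b`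
there is an integer `k₀ ≥ 1` with `γ_{k+1} ≤ exp(−q̄/k)` for all `k ≥ k₀`. -/
theorem gamma_exponential_bound (p b : ℝ) (hp : 1 < p) (hb : 0 < b)
    (qt : ℝ) (hqt : qt = (p - 1) / (b ^ (p - 1) + 1) + b / (b + 1))
    (qbar : ℝ) (hq : 0 < qbar) (hq' : qbar < qt) :
    ∃ k₀ : ℕ, 1 ≤ k₀ ∧ ∀ k : ℕ, k₀ ≤ k →
      gammaCoef p b k ≤ Real.exp (-qbar / (k : ℝ)) :=
  gamma_exponential_bound_general p b hb qt hqt qbar hq'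
end

section
/- Let p > 2 and b > 0. There exist constants δ₀ > 0 and C > 0 (depending only on p and b) such that the following holds for every δ ∈ (0, δ₀) and every integer i ≥ 2: if M ∈ ℝ^{2×2} satisfies |M − E| < δ for some E ∈ {B_i, −B_i, C_i, −C_i}, then, writing a := (M₁₁, M₁₂) and c := (M₂₁, M₂₂), one has | |a|^{p−2} a − (−c₂, c₁) | ≤ C · δ · |a|^{p−2}. -/
open Real

attribute [local instance] Matrix.normedAddCommGroup

/-- `B_i = diag(b(i−1), −b^{p−1}(i−1)^{p−1})`. -/
noncomputable def Bmat (p b : ℝ) (i : ℕ) : Matrix (Fin 2) (Fin 2) ℝ :=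
  !![b * ((i : ℝ) - 1), 0; 0, -(b ^ (p - 1) * ((i : ℝ) - 1) ^ (p - 1))]

/-- `C_i = diag(−i, i^{p−1})`. -/
noncomputable def Cmat (p b : ℝ) (i : ℕ) : Matrix (Fin 2) (Fin 2) ℝ :=
  !![-(i : ℝ), 0; 0, (i : ℝ) ^ (p - 1)]

/-- The vector `(x, y)` as an element of Euclidean `ℝ²`. -/
noncomputable def vec2 (x y : ℝ) : EuclideanSpace ℝ (Fin 2) :=
  (WithLp.equiv 2 (Fin 2 → ℝ)).symm ![x, y]

section Helpers

open Set

lemma norm_vec2_eq (x y : ℝ) : ‖vec2 x y‖ = Real.sqrt (x^2 + y^2) := by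
  rw [EuclideanSpace.norm_eq]
  simp [vec2, Fin.sum_univ_two, sq_abs]

lemma vec2_sub' (x y x' y' : ℝ) : vec2 x y - vec2 x' y' = vec2 (x-x') (y-y') := by
  ext i; fin_cases i <;> simp [vec2]

lemma smul_vec2' (r x y : ℝ) : r • vec2 x y = vec2 (r*x) (r*y) := by
  ext i; fin_cases i <;> simp [vec2]

lemma norm_vec2_le' (x y : ℝ) : ‖vec2 x y‖ ≤ |x| + |y| := by
  rw [norm_vec2_eq]
  have h : x^2 + y^2 ≤ (|x| + |y|)^2 := by
    nlinarith [abs_nonneg x, abs_nonneg y, sq_abs x, sq_abs y, mul_nonneg (abs_nonneg x) (abs_nonneg y)]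
  calc Real.sqrt (x^2 + y^2) ≤ Real.sqrt ((|x| + |y|)^2) := Real.sqrt_le_sqrt h
    _ = |x| + |y| := Real.sqrt_sq (by positivity)

lemma norm_vec2_snd_zero (x : ℝ) : ‖vec2 x 0‖ = |x| := by
  rw [norm_vec2_eq]; simp [Real.sqrt_sq_eq_abs]

lemma rpow_mvt_aux {q lo hi x y : ℝ} (hq : 0 < q) (hlo : 0 < lo)
    (hx : x ∈ Icc lo hi) (hy : y ∈ Icc lo hi) (hxy : x ≤ y) :
    y ^ q - x ^ q ≤ q * (lo ^ (q-1) + hi ^ (q-1)) * (y - x) := by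
  rcases eq_or_lt_of_le hxy with rfl | hlt
  · simp
  · obtain ⟨c, hc, hc'⟩ := exists_hasDerivAt_eq_slope (fun t => t ^ q)
      (fun t => q * t ^ (q-1)) hlt
      (by
        intro t ht
        have ht0 : (0:ℝ) < t := lt_of_lt_of_le hlo (le_trans hx.1 ht.1)
        exact (Real.continuousAt_rpow_const t q (Or.inl ht0.ne')).continuousWithinAt)
      (by
        intro t ht
        have ht0 : (0:ℝ) < t := lt_of_lt_of_le hlo (le_trans hx.1 ht.1.le)
        exact Real.hasDerivAt_rpow_const (Or.inl ht0.ne'))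
    have hc0 : 0 < c := lt_of_lt_of_le hlo (le_trans hx.1 hc.1.le)
    have hcb : c ^ (q-1) ≤ lo ^ (q-1) + hi ^ (q-1) := by
      rcases le_total 0 (q-1) with h | h
      · have h2 : c ^ (q-1) ≤ hi ^ (q-1) :=
          Real.rpow_le_rpow hc0.le (hc.2.le.trans hy.2) h
        nlinarith [Real.rpow_nonneg hlo.le (q-1)]
      · have h2 : c ^ (q-1) ≤ lo ^ (q-1) :=
          Real.rpow_le_rpow_of_nonpos hlo (hx.1.trans hc.1.le) h
        nlinarith [Real.rpow_nonneg (hlo.le.trans (hx.1.trans hx.2)) (q-1)]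
    rw [eq_div_iff (by linarith : y - x ≠ 0)] at hc'
    have h1 : 0 ≤ y - x := by linarith
    have := mul_le_mul_of_nonneg_right (mul_le_mul_of_nonneg_left hcb hq.le) h1
    linarith

lemma rpow_mvt {q lo hi x y : ℝ} (hq : 0 < q) (hlo : 0 < lo)
    (hx : x ∈ Icc lo hi) (hy : y ∈ Icc lo hi) :
    |x ^ q - y ^ q| ≤ q * (lo ^ (q-1) + hi ^ (q-1)) * |x - y| := by
  rcases le_total x y with h | h
  · have h1 : |x - y| = y - x := by rw [abs_sub_comm]; exact abs_of_nonneg (by linarith)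
    have h2 : |x ^ q - y ^ q| = y ^ q - x ^ q := by
      rw [abs_sub_comm]
      exact abs_of_nonneg (sub_nonneg.2 (Real.rpow_le_rpow (hlo.le.trans hx.1) h hq.le))
    rw [h1, h2]; exact rpow_mvt_aux hq hlo hx hy h
  · have h1 : |x - y| = x - y := abs_of_nonneg (by linarith)
    have h2 : |x ^ q - y ^ q| = x ^ q - y ^ q :=
      abs_of_nonneg (sub_nonneg.2 (Real.rpow_le_rpow (hlo.le.trans hy.1) h hq.le))
    rw [h1, h2]; exact rpow_mvt_aux hq hlo hy hx h

end Helpers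

/-- **Lemma (perturbed-kernel estimate, case `p > 2`).** There are `δ₀, C > 0`
(depending only on `p, b`) such that for every `δ ∈ (0,δ₀)`, every `i ≥ 2`, and every
matrix `M` with `|M − E| < δ` for some `E ∈ {±B_i, ±C_i}`, the rows `a = (M₁₁, M₁₂)`,
`c = (M₂₁, M₂₂)` satisfy `| |a|^{p−2}a − (−c₂, c₁) | ≤ C·δ·|a|^{p−2}`. -/
theorem perturbed_kernel_estimate_p_gt_two (p b : ℝ) (hp : 2 < p) (hb : 0 < b) :
    ∃ δ₀ C : ℝ, 0 < δ₀ ∧ 0 < C ∧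
      ∀ δ : ℝ, 0 < δ → δ < δ₀ →
      ∀ i : ℕ, 2 ≤ i →
      ∀ M E : Matrix (Fin 2) (Fin 2) ℝ,
        (E = Bmat p b i ∨ E = -Bmat p b i ∨ E = Cmat p b i ∨ E = -Cmat p b i) →
        ‖M - E‖ < δ →
        ‖(‖vec2 (M 0 0) (M 0 1)‖ ^ (p - 2)) • vec2 (M 0 0) (M 0 1)
            - vec2 (-(M 1 1)) (M 1 0)‖
          ≤ C * δ * ‖vec2 (M 0 0) (M 0 1)‖ ^ (p - 2) := by
  have hq : 0 < p - 2 := by linarith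
  set q : ℝ := p - 2 with hq'
  set r0 : ℝ := min b 2 with hr0'
  have hr0 : 0 < r0 := lt_min hb two_pos
  set A1 : ℝ := (2:ℝ) ^ q with hA1'
  set A2 : ℝ := (2:ℝ)⁻¹ ^ (q-1) + (2:ℝ) ^ (q-1) with hA2'
  set A3 : ℝ := ((r0/2) ^ q)⁻¹ with hA3'
  have hA1 : 0 < A1 := Real.rpow_pos_of_pos two_pos q
  have hA2 : 0 < A2 := by
    have := Real.rpow_pos_of_pos (show (0:ℝ) < 2⁻¹ by norm_num) (q-1)
    have := Real.rpow_pos_of_pos (show (0:ℝ) < 2 by norm_num) (q-1)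
    rw [hA2']; linarith
  have hA3 : 0 < A3 := by
    rw [hA3']
    exact inv_pos.2 (Real.rpow_pos_of_pos (by linarith) q)
  refine ⟨r0/4, 2 + 2*q*A2*A1 + 2*A3, by linarith, ?_, ?_⟩
  · have h1 : 0 < 2*q*A2*A1 := by positivity
    linarith
  intro δ hδ hδ0 i hi M E hE hME
  -- entrywise bounds
  have hent : ∀ k l : Fin 2, |M k l - E k l| < δ := by
    intro k l
    have h1 : |(M - E) k l| ≤ ‖M - E‖ := by
      simpa using (M - E).norm_entry_le_entrywise_sup_norm (i := k) (j := l)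
    simp only [Matrix.sub_apply] at h1
    linarith
  -- power identity
  have hpow : ∀ x : ℝ, 0 < x → x ^ q * x = x ^ (p-1) := by
    intro x hx
    rw [← Real.rpow_add_one hx.ne' q, show q + 1 = p - 1 by rw [hq']; ring]
  have hi1 : (1:ℝ) ≤ (i:ℝ) - 1 := by
    have : (2:ℝ) ≤ (i:ℝ) := by exact_mod_cast hi
    linarith
  -- structure of E
  obtain ⟨s, hsr0, hs0, hE01, hE10, hE00, hkey⟩ :
      ∃ s : ℝ, r0 ≤ s ∧ 0 < s ∧ E 0 1 = 0 ∧ E 1 0 = 0 ∧ |E 0 0| = s ∧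
        s ^ q * E 0 0 = -(E 1 1) := by
    have hbi : 0 < b * ((i:ℝ) - 1) := by nlinarith
    have hmulB : (b * ((i:ℝ)-1)) ^ q * (b * ((i:ℝ)-1)) = b ^ (p-1) * ((i:ℝ)-1) ^ (p-1) := by
      rw [hpow _ hbi, Real.mul_rpow hb.le (by linarith)]
    have hi0 : (0:ℝ) < (i:ℝ) := by linarith
    have hmulC : ((i:ℝ)) ^ q * ((i:ℝ)) = ((i:ℝ)) ^ (p-1) := hpow _ hi0
    rcases hE with rfl | rfl | rfl | rfl
    · refine ⟨b * ((i:ℝ)-1), le_trans (min_le_left _ _) (by nlinarith), hbi, ?_, ?_, ?_, ?_⟩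
      · simp [Bmat]
      · simp [Bmat]
      · rw [show Bmat p b i 0 0 = b * ((i:ℝ)-1) by simp [Bmat]]
        exact abs_of_pos hbi
      · rw [show Bmat p b i 0 0 = b * ((i:ℝ)-1) by simp [Bmat],
          show Bmat p b i 1 1 = -(b ^ (p-1) * ((i:ℝ)-1) ^ (p-1)) by simp [Bmat], hmulB]
        ring
    · refine ⟨b * ((i:ℝ)-1), le_trans (min_le_left _ _) (by nlinarith), hbi, ?_, ?_, ?_, ?_⟩
      · simp [Bmat]
      · simp [Bmat]
      · rw [show (-Bmat p b i) 0 0 = -(b * ((i:ℝ)-1)) by simp [Bmat]]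
        rw [abs_neg]; exact abs_of_pos hbi
      · rw [show (-Bmat p b i) 0 0 = -(b * ((i:ℝ)-1)) by simp [Bmat],
          show (-Bmat p b i) 1 1 = b ^ (p-1) * ((i:ℝ)-1) ^ (p-1) by simp [Bmat]]
        rw [mul_neg, hmulB]
    · refine ⟨(i:ℝ), le_trans (min_le_right _ _) (by linarith), hi0, ?_, ?_, ?_, ?_⟩
      · simp [Cmat]
      · simp [Cmat]
      · rw [show Cmat p b i 0 0 = -(i:ℝ) by simp [Cmat]]
        rw [abs_neg]; exact abs_of_pos hi0
      · rw [show Cmat p b i 0 0 = -(i:ℝ) by simp [Cmat],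
          show Cmat p b i 1 1 = ((i:ℝ)) ^ (p-1) by simp [Cmat]]
        rw [mul_neg, hmulC]
    · refine ⟨(i:ℝ), le_trans (min_le_right _ _) (by linarith), hi0, ?_, ?_, ?_, ?_⟩
      · simp [Cmat]
      · simp [Cmat]
      · rw [show (-Cmat p b i) 0 0 = (i:ℝ) by simp [Cmat]]
        exact abs_of_pos hi0
      · rw [show (-Cmat p b i) 0 0 = (i:ℝ) by simp [Cmat],
          show (-Cmat p b i) 1 1 = -(((i:ℝ)) ^ (p-1)) by simp [Cmat], hmulC]
        ring
  set u : EuclideanSpace ℝ (Fin 2) := vec2 (M 0 0) (M 0 1) with hu'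
  set v : EuclideanSpace ℝ (Fin 2) := vec2 (E 0 0) (E 0 1) with hv'
  have hnv : ‖v‖ = s := by rw [hv', hE01, norm_vec2_snd_zero, hE00]
  have huv : ‖u - v‖ ≤ 2*δ := by
    rw [hu', hv', vec2_sub']
    calc ‖vec2 (M 0 0 - E 0 0) (M 0 1 - E 0 1)‖ ≤ |M 0 0 - E 0 0| + |M 0 1 - E 0 1| :=
          norm_vec2_le' _ _
      _ ≤ 2*δ := by have := hent 0 0; have := hent 0 1; linarith
  have habs : |‖u‖ - ‖v‖| ≤ 2*δ :=
    le_trans (abs_norm_sub_norm_le u v) huv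
  have hδ0' : δ < r0 / 4 := hδ0
  have hδs : 2*δ ≤ s/2 := by linarith
  have hul : s/2 ≤ ‖u‖ := by
    have := (abs_le.1 habs).1; rw [hnv] at this; linarith
  have huh : ‖u‖ ≤ 2*s := by
    have := (abs_le.1 habs).2; rw [hnv] at this; linarith
  have humem : ‖u‖ ∈ Set.Icc (s/2) (2*s) := ⟨hul, huh⟩
  have hvmem : ‖v‖ ∈ Set.Icc (s/2) (2*s) := by rw [hnv]; exact ⟨by linarith, by linarith⟩
  have hmvt := rpow_mvt hq (show (0:ℝ) < s/2 by linarith) humem hvmem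
  -- rewrite the mvt coefficient
  have hcoef : (s/2) ^ (q-1) + (2*s) ^ (q-1) = A2 * s ^ (q-1) := by
    rw [show s/2 = 2⁻¹ * s by ring, Real.mul_rpow (by norm_num) hs0.le,
      Real.mul_rpow (by norm_num) hs0.le, hA2']
    ring
  rw [hcoef] at hmvt
  have hmvt2 : |‖u‖ ^ q - ‖v‖ ^ q| ≤ q * (A2 * s ^ (q-1)) * (2*δ) := by
    refine le_trans hmvt ?_
    have h0 : 0 ≤ q * (A2 * s ^ (q-1)) :=
      mul_nonneg hq.le (mul_nonneg hA2.le (Real.rpow_nonneg hs0.le _))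
    exact mul_le_mul_of_nonneg_left habs h0
  -- the key vector identity at E
  have hvv : ‖v‖ ^ q • v = vec2 (-(E 1 1)) (E 1 0) := by
    rw [hnv, hv', smul_vec2', hkey, hE01, hE10, mul_zero]
  -- decomposition
  have hdecomp : (‖u‖ ^ q) • u - vec2 (-(M 1 1)) (M 1 0)
      = (‖u‖ ^ q) • (u - v) + (‖u‖ ^ q - ‖v‖ ^ q) • v
        + (‖v‖ ^ q • v - vec2 (-(M 1 1)) (M 1 0)) := by
    module
  have hthird : ‖‖v‖ ^ q • v - vec2 (-(M 1 1)) (M 1 0)‖ ≤ 2*δ := by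
    rw [hvv, vec2_sub']
    calc ‖vec2 (-(E 1 1) - -(M 1 1)) (E 1 0 - M 1 0)‖
        ≤ |(-(E 1 1) - -(M 1 1))| + |E 1 0 - M 1 0| := norm_vec2_le' _ _
      _ ≤ 2*δ := by
          have h1 := hent 1 1; have h2 := hent 1 0
          rw [show -(E 1 1) - -(M 1 1) = M 1 1 - E 1 1 by ring]
          rw [abs_sub_comm (E 1 0)]
          linarith
  have hN : (0:ℝ) ≤ ‖u‖ ^ q := Real.rpow_nonneg (norm_nonneg u) q
  have hfirst : ‖(‖u‖ ^ q) • (u - v)‖ ≤ ‖u‖ ^ q * (2*δ) := by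
    rw [norm_smul, Real.norm_eq_abs, abs_of_nonneg hN]
    exact mul_le_mul_of_nonneg_left huv hN
  have hsecond : ‖(‖u‖ ^ q - ‖v‖ ^ q) • v‖ ≤ (q * (A2 * s ^ (q-1)) * (2*δ)) * s := by
    have hmvt3 : |‖u‖ ^ q - ‖v‖ ^ q| ≤ q * (A2 * s ^ (q-1)) * (2*δ) := hmvt2
    rw [norm_smul, Real.norm_eq_abs, hnv] at *
    exact mul_le_mul_of_nonneg_right hmvt3 hs0.le
  -- combine powers of s
  have hsq : s ^ (q-1) * s = s ^ q := by
    rw [← Real.rpow_add_one hs0.ne' (q-1)]; norm_num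
  have hsA1 : s ^ q ≤ A1 * ‖u‖ ^ q := by
    have h1 : s ^ q ≤ (2*‖u‖) ^ q := Real.rpow_le_rpow hs0.le (by linarith) hq.le
    rwa [Real.mul_rpow (by norm_num) (norm_nonneg u), ← hA1'] at h1
  have hone : 1 ≤ A3 * ‖u‖ ^ q := by
    have h1 : (r0/2) ^ q ≤ ‖u‖ ^ q :=
      Real.rpow_le_rpow (by linarith) (by linarith) hq.le
    have h2 : (0:ℝ) < (r0/2) ^ q := Real.rpow_pos_of_pos (by linarith) q
    rw [hA3']
    rw [show (1:ℝ) = ((r0/2) ^ q)⁻¹ * ((r0/2) ^ q) by rw [inv_mul_cancel₀ h2.ne']]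
    exact mul_le_mul_of_nonneg_left h1 (inv_nonneg.2 h2.le)
  have hsecond2 : (q * (A2 * s ^ (q-1)) * (2*δ)) * s ≤ 2*q*A2*A1*δ*(‖u‖ ^ q) := by
    have e : (q * (A2 * s ^ (q-1)) * (2*δ)) * s = (2*q*A2*δ) * (s ^ (q-1) * s) := by ring
    rw [e, hsq]
    have h0 : (0:ℝ) ≤ 2*q*A2*δ :=
      mul_nonneg (mul_nonneg (mul_nonneg (by norm_num) hq.le) hA2.le) hδ.le
    calc (2*q*A2*δ) * s ^ q ≤ (2*q*A2*δ) * (A1 * ‖u‖ ^ q) :=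
          mul_le_mul_of_nonneg_left hsA1 h0
      _ = 2*q*A2*A1*δ*(‖u‖ ^ q) := by ring
  have hthird2 : (2:ℝ)*δ ≤ 2*A3*δ*(‖u‖ ^ q) := by
    calc (2:ℝ)*δ = (2*δ) * 1 := by ring
      _ ≤ (2*δ) * (A3 * ‖u‖ ^ q) := mul_le_mul_of_nonneg_left hone (by linarith)
      _ = 2*A3*δ*(‖u‖ ^ q) := by ring
  calc ‖(‖u‖ ^ q) • u - vec2 (-(M 1 1)) (M 1 0)‖
      = ‖(‖u‖ ^ q) • (u - v) + (‖u‖ ^ q - ‖v‖ ^ q) • v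
        + (‖v‖ ^ q • v - vec2 (-(M 1 1)) (M 1 0))‖ := by rw [← hdecomp]
    _ ≤ ‖(‖u‖ ^ q) • (u - v)‖ + ‖(‖u‖ ^ q - ‖v‖ ^ q) • v‖
        + ‖‖v‖ ^ q • v - vec2 (-(M 1 1)) (M 1 0)‖ := norm_add₃_le
    _ ≤ ‖u‖ ^ q * (2*δ) + (q * (A2 * s ^ (q-1)) * (2*δ)) * s + 2*δ := by
        linarith [hfirst, hsecond, hthird]
    _ ≤ ‖u‖ ^ q * (2*δ) + 2*q*A2*A1*δ*(‖u‖ ^ q) + 2*A3*δ*(‖u‖ ^ q) := by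
        linarith [hsecond2, hthird2]
    _ = (2 + 2*q*A2*A1 + 2*A3) * δ * ‖u‖ ^ q := by ring
end
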